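/- Let d ≥ 1. There exists a constant C > 0, depending only on d, such that for every integer k ≥ 1 the number of points of ℤ^d that are k-near to 0 is at most C·k. -/

import Mathlib

open Set Metric MeasureTheory ENNReal

noncomputable section

/-- The integer lattice `ℤ^d` as a subset of `ℝ^d`. -/
def intLattice (d : ℕ) : Set (EuclideanSpace ℝ (Fin d)) :=
  {x | ∀ i, ∃ n : ℤ, x i = (n : ℝ)}

/-- The canonical embedding of integer vectors into `ℝ^d`. -/
def toEuc (d : ℕ) (a : Fin d → ℤ) : EuclideanSpace ℝ (Fin d) :=
  WithLp.toLp 2 (fun i => (a i : ℝ))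

/-- The `k`-th Brillouin zone of `a` in `A`: points `x` such that at most `k-1` points of
`A \ {a}` are strictly closer to `x` than `a`, and at least `k-1` points of `A \ {a}` are
at distance at most `dist x a` from `x`. -/
def brillouinZone (d k : ℕ) (A : Set (EuclideanSpace ℝ (Fin d)))
    (a : EuclideanSpace ℝ (Fin d)) : Set (EuclideanSpace ℝ (Fin d)) :=
  {x | {p | p ∈ A \ {a} ∧ dist x p < dist x a}.encard ≤ ((k - 1 : ℕ) : ℕ∞) ∧
       ((k - 1 : ℕ) : ℕ∞) ≤ {p | p ∈ A \ {a} ∧ dist x p ≤ dist x a}.encard}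

/-- The set of points with exactly `k-1` points of `A \ {a}` strictly closer than `a` and
no point of `A \ {a}` at exactly distance `dist x a`; its connected components are the
chambers of the `k`-th Brillouin zone. -/
def chamberRegion (d k : ℕ) (A : Set (EuclideanSpace ℝ (Fin d)))
    (a : EuclideanSpace ℝ (Fin d)) : Set (EuclideanSpace ℝ (Fin d)) :=
  {x | {p | p ∈ A \ {a} ∧ dist x p < dist x a}.encard = ((k - 1 : ℕ) : ℕ∞) ∧
       ∀ p ∈ A \ {a}, dist x p ≠ dist x a}

/-- The chambers of the `k`-th Brillouin zone of `a` in `A`. -/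
def chambers (d k : ℕ) (A : Set (EuclideanSpace ℝ (Fin d)))
    (a : EuclideanSpace ℝ (Fin d)) : Set (Set (EuclideanSpace ℝ (Fin d))) :=
  {C | ∃ x ∈ chamberRegion d k A a, C = connectedComponentIn (chamberRegion d k A a) x}

/-- `ν_d`, the volume of the unit ball in `ℝ^d`. -/
def unitBallVol (d : ℕ) : ℝ := Real.pi ^ ((d : ℝ) / 2) / Real.Gamma ((d : ℝ) / 2 + 1)

/-- A point `b` of `ℤ^d` is `k`-near to `0` if there is a closed ball with `0` on its
boundary, `b` in its interior, and at most `k-1` points of `ℤ^d` in its interior. -/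
def kNear (d k : ℕ) (b : EuclideanSpace ℝ (Fin d)) : Prop :=
  ∃ (c : EuclideanSpace ℝ (Fin d)) (r : ℝ), ‖c‖ = r ∧ dist b c < r ∧
    {p | p ∈ intLattice d ∧ dist p c < r}.encard ≤ ((k - 1 : ℕ) : ℕ∞)

/-!
A ball whose interior holds fewer than `k` lattice points cannot contain a lattice cube with
`(⌊k^{1/d}⌋ + 1)^d > k` points, so its radius is at most `√d (⌊k^{1/d}⌋ + 1)`. A `k`-near point
lies within twice that radius of `0`, hence in a box of side `O(d k^{1/d})`, which holds
`O_d(k)` lattice points.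
-/

@[simp]
lemma toEuc_apply {d : ℕ} (a : Fin d → ℤ) (i : Fin d) : toEuc d a i = a i := rfl

lemma toEuc_injective (d : ℕ) : Function.Injective (toEuc d) := fun a b h =>
  funext fun i => by simpa using congrArg (fun v : EuclideanSpace ℝ (Fin d) => v i) h

lemma mem_intLattice_iff {d : ℕ} {x : EuclideanSpace ℝ (Fin d)} :
    x ∈ intLattice d ↔ ∃ a, toEuc d a = x := by
  refine ⟨fun hx => ?_, ?_⟩
  · choose a ha using hx
    exact ⟨a, by ext i; exact (ha i).symm⟩
  · rintro ⟨a, rfl⟩ i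
    exact ⟨a i, rfl⟩

lemma encard_toEuc_image_piFinset {d : ℕ} (F : Fin d → Finset ℤ) :
    (toEuc d '' ↑(Fintype.piFinset F)).encard = ((∏ i, (F i).card : ℕ) : ℕ∞) := by
  rw [(toEuc_injective d).encard_image, Set.encard_coe_eq_coe_finsetCard,
    Fintype.card_piFinset]

lemma EuclideanSpace.dist_le_sqrt_card_mul {d : ℕ} {x y : EuclideanSpace ℝ (Fin d)} {s : ℝ}
    (hs : 0 ≤ s) (h : ∀ i, |x i - y i| ≤ s) : dist x y ≤ √d * s := by
  rw [EuclideanSpace.dist_eq, ← Real.sqrt_sq hs, ← Real.sqrt_mul (Nat.cast_nonneg d)]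
  gcongr
  calc ∑ i, dist (x i) (y i) ^ 2 ≤ ∑ _i : Fin d, s ^ 2 := by
        gcongr with i
        exact (Real.dist_eq _ _).trans_le (h i)
    _ = d * s ^ 2 := by simp

lemma encard_intLattice_abs_le (d M : ℕ) :
    {b | b ∈ intLattice d ∧ ∀ i, |b i| ≤ M}.encard ≤ ((2 * M + 1) ^ d : ℕ) := by
  calc {b | b ∈ intLattice d ∧ ∀ i, |b i| ≤ M}.encard
      ≤ (toEuc d '' ↑(Fintype.piFinset fun _ : Fin d => Finset.Icc (-(M : ℤ)) M)).encard := by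
        refine Set.encard_mono ?_
        rintro _ ⟨hb, hM⟩
        obtain ⟨a, rfl⟩ := mem_intLattice_iff.1 hb
        refine ⟨a, Fintype.mem_piFinset.2 fun i => Finset.mem_Icc.2 (abs_le.1 ?_), rfl⟩
        exact_mod_cast (by simpa using hM i : |(a i : ℝ)| ≤ M)
    _ = ((2 * M + 1) ^ d : ℕ) := by
        rw [encard_toEuc_image_piFinset]
        simp only [Int.card_Icc, Finset.prod_const, Finset.card_univ, Fintype.card_fin]
        congr 3
        omega

lemma pow_le_encard_intLattice_ball {d : ℕ} (c : EuclideanSpace ℝ (Fin d)) {r : ℝ} {m : ℕ}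
    (h : √d * m < r) :
    ((m ^ d : ℕ) : ℕ∞) ≤ {p | p ∈ intLattice d ∧ dist p c < r}.encard := by
  -- the lattice cube of side `m` with lowest corner `⌈c⌉` lies within `√d * m` of `c`
  calc ((m ^ d : ℕ) : ℕ∞)
      = (toEuc d '' ↑(Fintype.piFinset fun i => Finset.Ico ⌈c i⌉ (⌈c i⌉ + m))).encard := by
        simp only [encard_toEuc_image_piFinset, Int.card_Ico, add_sub_cancel_left,
          Int.toNat_natCast, Finset.prod_const, Finset.card_univ, Fintype.card_fin]
    _ ≤ _ := by
        refine Set.encard_mono ?_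
        rintro _ ⟨a, ha, rfl⟩
        refine ⟨mem_intLattice_iff.2 ⟨a, rfl⟩, lt_of_le_of_lt ?_ h⟩
        refine EuclideanSpace.dist_le_sqrt_card_mul (Nat.cast_nonneg m) fun i => ?_
        have hi := Finset.mem_Ico.1 (Fintype.mem_piFinset.1 ha i)
        have h₁ : c i ≤ a i := (Int.le_ceil _).trans (Int.cast_le.2 hi.1)
        have h₂ : (a i : ℝ) + 1 ≤ ⌈c i⌉ + m := by exact_mod_cast hi.2
        have h₃ := Int.ceil_lt_add_one (c i)
        rw [toEuc_apply, abs_le]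
        constructor <;> linarith

lemma kNear.norm_lt {d k : ℕ} (hd : d ≠ 0) {b : EuclideanSpace ℝ (Fin d)} (h : kNear d k b) :
    ‖b‖ < 2 * √d * (Nat.nthRoot d k + 1) := by
  obtain ⟨c, r, hcr, hbc, hcount⟩ := h
  have hr : r ≤ √d * (Nat.nthRoot d k + 1) := by
    by_contra! hlt
    have hcube := (pow_le_encard_intLattice_ball c
      (m := Nat.nthRoot d k + 1) (by exact_mod_cast hlt)).trans hcount
    have hroot := Nat.lt_pow_nthRoot_add_one hd k
    norm_cast at hcube
    omega
  calc ‖b‖ ≤ dist b c + ‖c‖ := by simpa using dist_triangle b c 0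
    _ < 2 * √d * (Nat.nthRoot d k + 1) := by linarith

lemma kNear.abs_apply_le {d k : ℕ} (hd : d ≠ 0) (hk : k ≠ 0) {b : EuclideanSpace ℝ (Fin d)}
    (h : kNear d k b) (i : Fin d) : |b i| ≤ (4 * d * Nat.nthRoot d k : ℕ) := by
  have hsqrt : √d ≤ d :=
    Real.sqrt_le_self_iff.2 (Or.inr (by exact_mod_cast Nat.one_le_iff_ne_zero.2 hd))
  have hR : (1 : ℝ) ≤ Nat.nthRoot d k := by
    exact_mod_cast (Nat.le_nthRoot_iff hd).2 (by simpa [Nat.one_le_iff_ne_zero] using hk)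
  calc |b i| ≤ ‖b‖ := by simpa using PiLp.norm_apply_le b i
    _ ≤ 2 * √d * (Nat.nthRoot d k + 1) := (h.norm_lt hd).le
    _ ≤ (4 * d * Nat.nthRoot d k : ℕ) := by push_cast; nlinarith [Real.sqrt_nonneg d]

/-- There is a constant `C > 0`, depending only on `d`, such that for every
`k ≥ 1` the number of points of `ℤ^d` that are `k`-near to `0` is at most `C·k`. -/
theorem near_points_bound (d : ℕ) (hd : 1 ≤ d) :
    ∃ C > (0 : ℝ), ∀ k : ℕ, 1 ≤ k →
      (({b | b ∈ intLattice d ∧ kNear d k b}.encard : ℝ≥0∞))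
        ≤ ENNReal.ofReal (C * k) := by
  have hd₀ : d ≠ 0 := Nat.one_le_iff_ne_zero.1 hd
  refine ⟨((9 * d) ^ d : ℕ), by positivity, fun k hk => ?_⟩
  set R := Nat.nthRoot d k
  have hR : 1 ≤ R := (Nat.le_nthRoot_iff hd₀).2 (by simpa using hk)
  have hsub : {b | b ∈ intLattice d ∧ kNear d k b} ⊆
      {b | b ∈ intLattice d ∧ ∀ i, |b i| ≤ (4 * d * R : ℕ)} :=
    fun b ⟨hb, hnear⟩ => ⟨hb, hnear.abs_apply_le hd₀ (by omega)⟩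
  have hcount : (2 * (4 * d * R) + 1) ^ d ≤ (9 * d) ^ d * k := calc
    _ ≤ (9 * d * R) ^ d := by gcongr; nlinarith
    _ = (9 * d) ^ d * R ^ d := mul_pow _ _ _
    _ ≤ (9 * d) ^ d * k := by gcongr; exact Nat.pow_nthRoot_le (Or.inl hd₀)
  calc (({b | b ∈ intLattice d ∧ kNear d k b}.encard : ℝ≥0∞))
      ≤ (((9 * d) ^ d * k : ℕ) : ℕ∞) := ENat.toENNReal_le.2 <| (Set.encard_mono hsub).trans <|
        (encard_intLattice_abs_le d _).trans (by exact_mod_cast hcount)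
    _ = ENNReal.ofReal (((9 * d) ^ d : ℕ) * k) := by
        rw [← Nat.cast_mul, ENNReal.ofReal_natCast]; rfl
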